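/- arXiv:math/0306416 — 2 statements merged into one kernel-verified Lean document; each statement's English description precedes it below -/
import Mathlib

section
/- If L is a regular language over a one-letter alphabet Σ = {a}, then sc(root(L)) ≤ sc(L). -/
/-!
Over a one-letter alphabet `{a}` a word is determined by its length, and a DFA reading `aⁿ`
follows the orbit of the single map `g = (δ · a)` from the start state. If `aᵏ` and `aᵏ⁺ᵈ`
reach the same state, that state is `d`-periodic under `g`, hence so is every later state, and
therefore `aᵐᵏ` and `aᵐ⁽ᵏ⁺ᵈ⁾` reach the same state for all `m`. So membership in `root L` only
depends on the state reached in a DFA for `L`, and a minimal DFA for `L` with its accepting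
states re-chosen recognizes `root L`.
-/

/-- `root L` = words some positive power of which lies in `L`. -/
def root {A : Type} (L : Language A) : Language A :=
  {w | ∃ m : ℕ, 1 ≤ m ∧ (List.replicate m w).flatten ∈ L}

/-- A language is regular if some DFA with finitely many states recognizes it. -/
def IsReg {A : Type} (L : Language A) : Prop :=
  ∃ (σ : Type) (_ : Fintype σ) (M : DFA A σ), M.accepts = L

/-- The state complexity of a language: the least number of states of a DFA recognizing it. -/
noncomputable def sc {A : Type} (L : Language A) : ℕ :=
  sInf {m | ∃ (σ : Type) (_ : Fintype σ) (M : DFA A σ), M.accepts = L ∧ Fintype.card σ = m}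

theorem Function.iterate_mul_eq_of_iterate_eq {α : Type*} {g : α → α} {x : α} {k k' : ℕ}
    (h : g^[k] x = g^[k'] x) (m : ℕ) : g^[m * k] x = g^[m * k'] x := by
  wlog hkk' : k ≤ k' generalizing k k'
  · exact (this h.symm (by omega)).symm
  obtain ⟨d, rfl⟩ := Nat.exists_eq_add_of_le hkk'
  rcases Nat.eq_zero_or_pos m with rfl | hm
  · simp
  have hperiodic : Function.IsPeriodicPt g d (g^[k] x) := by
    rw [Function.IsPeriodicPt, Function.IsFixedPt, ← Function.iterate_add_apply, add_comm, ← h]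
  have hshift : g^[m * k] x = g^[m * k - k] (g^[k] x) := by
    rw [← Function.iterate_add_apply, Nat.sub_add_cancel (Nat.le_mul_of_pos_left k hm)]
  have hperiodic_mul : Function.IsPeriodicPt g (m * d) (g^[m * k] x) :=
    hshift ▸ (hperiodic.apply_iterate (m * k - k)).const_mul m
  rw [Nat.mul_add, add_comm, Function.iterate_add_apply, hperiodic_mul.eq]

namespace DFA

variable {α σ : Type*}

theorem eval_replicate (M : DFA α σ) (a : α) (n : ℕ) :
    M.eval (List.replicate n a) = (M.step · a)^[n] M.start := by
  induction n with
  | zero => rfl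
  | succ n ih =>
    rw [List.replicate_succ', eval_append_singleton, ih, Function.iterate_succ_apply']

def withAcceptImage (M : DFA α σ) (K : Language α) : DFA α σ :=
  { M with accept := M.eval '' K }

theorem accepts_withAcceptImage {M : DFA α σ} {K : Language α}
    (hK : ∀ u v, M.eval u = M.eval v → u ∈ K → v ∈ K) :
    (M.withAcceptImage K).accepts = K := by
  ext w
  constructor
  · rintro ⟨u, hu, huw⟩
    exact hK u w huw hu
  · intro hw
    exact ⟨w, hw, rfl⟩

end DFA

theorem sc_le_card {A σ : Type} [Fintype σ] (M : DFA A σ) : sc M.accepts ≤ Fintype.card σ :=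
  Nat.sInf_le ⟨σ, inferInstance, M, rfl, rfl⟩

theorem IsReg.exists_dfa_card_eq_sc {A : Type} {L : Language A} (hL : IsReg L) :
    ∃ (σ : Type) (_ : Fintype σ) (M : DFA A σ), M.accepts = L ∧ Fintype.card σ = sc L := by
  obtain ⟨σ, _, M, hM⟩ := hL
  exact Nat.sInf_mem (s := {m | ∃ (σ : Type) (_ : Fintype σ) (M : DFA A σ),
    M.accepts = L ∧ Fintype.card σ = m}) ⟨Fintype.card σ, σ, inferInstance, M, hM, rfl⟩

theorem replicate_mem_root_iff {A : Type} {L : Language A} (a : A) (n : ℕ) :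
    List.replicate n a ∈ root L ↔ ∃ m, 1 ≤ m ∧ List.replicate (m * n) a ∈ L := by
  show (∃ m, 1 ≤ m ∧ _ ∈ L) ↔ _
  simp only [List.flatten_replicate_replicate]

theorem mem_root_accepts_of_eval_eq {A σ : Type} {a : A} (ha : ∀ b, b = a)
    (M : DFA A σ) {u v : List A} (huv : M.eval u = M.eval v) (hu : u ∈ root M.accepts) :
    v ∈ root M.accepts := by
  have hword : ∀ w : List A, w = List.replicate w.length a :=
    fun w => List.eq_replicate_length.mpr fun b _ => ha b
  rw [hword u, replicate_mem_root_iff] at hu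
  rw [hword v, replicate_mem_root_iff]
  obtain ⟨m, hm, hmem⟩ := hu
  refine ⟨m, hm, ?_⟩
  rw [hword u, hword v, DFA.eval_replicate, DFA.eval_replicate] at huv
  rw [DFA.mem_accepts, DFA.eval_replicate] at hmem ⊢
  rwa [← Function.iterate_mul_eq_of_iterate_eq huv]

/-- **Proposition 2.1 (bound).** For a regular language `L` over a one-letter alphabet,
`sc (root L) ≤ sc L`. -/
theorem proposition_2_1 {A : Type} [Fintype A] (hA : Fintype.card A = 1)
    (L : Language A) (hreg : IsReg L) :
    sc (root L) ≤ sc L := by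
  obtain ⟨a, ha⟩ := Fintype.card_eq_one_iff.mp hA
  obtain ⟨σ, _, M, rfl, hcard⟩ := hreg.exists_dfa_card_eq_sc
  rw [← hcard, ← DFA.accepts_withAcceptImage (K := root M.accepts)
    (fun _ _ => mem_root_accepts_of_eval_eq ha M)]
  exact sc_le_card _
end

section
/- For every integer n ≥ 7, |U_{2,n−2}| − |U_{n−2,2}| ≥ n(n−1)/2. -/
/-- The submonoid of transformations of `Fin n` generated by `X`:
all finite compositions of elements of `X` (including the identity). -/
def MGen {n : ℕ} (X : Set (Fin n → Fin n)) : Set (Fin n → Fin n) :=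
  {f | ∃ l : List (Fin n → Fin n), (∀ g ∈ l, g ∈ X) ∧ f = l.foldr (· ∘ ·) id}

/-- The rank of a transformation: the number of elements of its image. -/
def rank {n : ℕ} (f : Fin n → Fin n) : ℕ := (Finset.image f Finset.univ).card

/-- The permutation of `Z_n = {1,…,n}` (coded as `Fin n`, with `i : Fin n` standing for
`i+1 ∈ Z_n`) with cycle decomposition `(1 2 ⋯ k)(k+1 k+2 ⋯ n)`. -/
def twoCycle (n k : ℕ) (i : Fin n) : Fin n :=
  ⟨(if i.val + 1 = k then 0 else if i.val + 1 = n then k else i.val + 1) % n,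
    Nat.mod_lt _ i.pos⟩

/-- The set `U_{k,l} ⊆ T_n` (with `l = n - k`): all `γ` such that exactly one of the
following holds: (1) `γ = α^m` for some `m ≥ 1`, where `α = (1 ⋯ k)(k+1 ⋯ n)`;
(2) `γ(i) = γ(j)` for some `i ∈ {1,…,k}`, `j ∈ {k+1,…,n}`, and some
`m ∈ {k+1,…,n}` is not in the image of `γ`. -/
def Ukl (n k : ℕ) : Set (Fin n → Fin n) :=
  {γ | Xor'
    (∃ m : ℕ, 1 ≤ m ∧ γ = (twoCycle n k)^[m])
    ((∃ i j : Fin n, i.val < k ∧ k ≤ j.val ∧ γ i = γ j) ∧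
      ∃ m : Fin n, k ≤ m.val ∧ m ∉ Set.range γ)}

/-!
The cyclic powers and the collapsing maps (condition (2)) are disjoint parts of `U_{k,l}`, since
the former are permutations and the latter are not injective. Rotating `Z_n` by `l` conjugates
`(1 ⋯ k)(k+1 ⋯ n)` into `(1 ⋯ l)(l+1 ⋯ n)`, so `U_{2,n-2}` has as many cyclic powers as
`U_{n-2,2}`.
Precomposing with the reversal `i ↦ n + 1 - i` swaps the two blocks of the domain without
changing the image, so it embeds the collapsing maps of `U_{n-2,2}` into those of `U_{2,n-2}`.
None of the images contains both `n - 1` and `n`, whereas the `n²` maps which send `2` to `y` and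
`1, 3, 4, 5` to `x` and fix `6, …, n` are collapsing maps of `U_{2,n-2}` containing both (each of
them omits one of `3, 4, 5`).
-/

open Function

def twoCyclePowers (n k : ℕ) : Set (Fin n → Fin n) :=
  {γ | ∃ m : ℕ, 1 ≤ m ∧ γ = (twoCycle n k)^[m]}

def collapsingMaps (n k : ℕ) : Set (Fin n → Fin n) :=
  {γ | (∃ i j : Fin n, i.val < k ∧ k ≤ j.val ∧ γ i = γ j) ∧
    ∃ m : Fin n, k ≤ m.val ∧ m ∉ Set.range γ}

section

variable {n k l : ℕ}

lemma twoCycle_val (hk : k ≤ n) (i : Fin n) :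
    (twoCycle n k i).val =
      if i.val + 1 = k then 0 else if i.val + 1 = n then k else i.val + 1 := by
  have := i.isLt
  simp only [twoCycle]
  split_ifs
  · exact Nat.zero_mod n
  · exact Nat.mod_eq_of_lt (by omega)
  · exact Nat.mod_eq_of_lt (by omega)

lemma twoCycle_injective (hk : k ≤ n) : Injective (twoCycle n k) := by
  intro i j h
  rw [Fin.ext_iff, twoCycle_val hk, twoCycle_val hk] at h
  ext
  split_ifs at h <;> omega

lemma twoCycle_semiconj_add (hk : 0 < k) (hkl : k + l = n) :
    Semiconj (· + ⟨l, by omega⟩) (twoCycle n k) (twoCycle n l) := by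
  intro i
  have := i.isLt
  ext
  simp only [Fin.val_add_eq_ite, twoCycle_val (show k ≤ n by omega),
    twoCycle_val (show l ≤ n by omega)]
  split_ifs <;> omega

lemma ncard_twoCyclePowers_le (hk : 0 < k) (hkl : k + l = n) :
    (twoCyclePowers n k).ncard ≤ (twoCyclePowers n l).ncard := by
  have : NeZero n := ⟨by omega⟩
  let ρ := Equiv.addRight (⟨l, by omega⟩ : Fin n)
  refine Set.ncard_le_ncard_of_injOn (ρ.arrowCongr ρ) ?_ (ρ.arrowCongr ρ).injective.injOn
  rintro _ ⟨m, hm, rfl⟩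
  refine ⟨m, hm, funext fun x => ?_⟩
  simpa [ρ] using (twoCycle_semiconj_add hk hkl).iterate_right m (ρ.symm x)

lemma disjoint_twoCyclePowers_collapsingMaps (hk : k ≤ n) :
    Disjoint (twoCyclePowers n k) (collapsingMaps n k) := by
  rw [Set.disjoint_left]
  rintro _ ⟨m, -, rfl⟩ ⟨⟨i, j, hi, hj, hij⟩, -⟩
  have := (twoCycle_injective hk).iterate m hij
  omega

lemma Ukl_eq_union (hk : k ≤ n) : Ukl n k = twoCyclePowers n k ∪ collapsingMaps n k := by
  ext
  have hd := Set.disjoint_left.mp (disjoint_twoCyclePowers_collapsingMaps hk)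
  exact (xor_iff_or_and_not_and _ _).trans ⟨And.left, fun h => ⟨h, fun h' => hd h'.1 h'.2⟩⟩

lemma ncard_Ukl (hk : k ≤ n) :
    (Ukl n k).ncard = (twoCyclePowers n k).ncard + (collapsingMaps n k).ncard := by
  rw [Ukl_eq_union hk]
  exact Set.ncard_union_eq (disjoint_twoCyclePowers_collapsingMaps hk)

lemma comp_rev_mem_collapsingMaps {γ : Fin n → Fin n} (hkl : k + l = n) (hlk : l ≤ k)
    (hγ : γ ∈ collapsingMaps n k) : γ ∘ Fin.rev ∈ collapsingMaps n l := by
  obtain ⟨⟨i, j, hi, hj, hij⟩, m, hm, hmγ⟩ := hγ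
  refine ⟨⟨j.rev, i.rev, ?_, ?_, by simp [hij]⟩, m, by omega, ?_⟩
  · rw [Fin.val_rev]; omega
  · rw [Fin.val_rev]; omega
  · rwa [Fin.rev_surjective.range_comp]

end

def lowCollapse {n : ℕ} (x y : Fin n) (t : Fin n) : Fin n :=
  if t.val = 1 then y else if t.val < 5 then x else t

section

variable {n : ℕ}

lemma lowCollapse_mem_collapsingMaps (hn : 5 ≤ n) (x y : Fin n) :
    lowCollapse x y ∈ collapsingMaps n 2 := by
  refine ⟨⟨⟨0, by omega⟩, ⟨2, by omega⟩, by simp, by simp, by simp [lowCollapse]⟩, ?_⟩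
  obtain ⟨m, hm2, hm5, hmx, hmy⟩ : ∃ m, 2 ≤ m ∧ m < 5 ∧ m ≠ x.val ∧ m ≠ y.val := by
    by_cases h2 : x.val ≠ 2 ∧ y.val ≠ 2
    · exact ⟨2, le_rfl, by omega, Ne.symm h2.1, Ne.symm h2.2⟩
    by_cases h3 : x.val ≠ 3 ∧ y.val ≠ 3
    · exact ⟨3, by omega, by omega, Ne.symm h3.1, Ne.symm h3.2⟩
    exact ⟨4, by omega, by omega, by omega, by omega⟩
  refine ⟨⟨m, by omega⟩, hm2, ?_⟩
  rintro ⟨t, ht⟩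
  simp only [lowCollapse, Fin.ext_iff] at ht
  split_ifs at ht <;> omega

lemma mem_range_lowCollapse {x y m : Fin n} (hm : 5 ≤ m.val) :
    m ∈ Set.range (lowCollapse x y) :=
  ⟨m, by
    simp only [lowCollapse, if_neg (show m.val ≠ 1 by omega), if_neg (show ¬m.val < 5 by omega)]⟩

lemma lowCollapse_injective (hn : 2 ≤ n) : Injective (uncurry (lowCollapse (n := n))) := by
  rintro ⟨x, y⟩ ⟨x', y'⟩ h
  have h0 := congrFun h ⟨0, by omega⟩
  have h1 := congrFun h ⟨1, by omega⟩
  simp only [uncurry, lowCollapse] at h0 h1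
  simp_all

lemma ncard_collapsingMaps_add_sq_le (hn : 7 ≤ n) :
    (collapsingMaps n (n - 2)).ncard + n ^ 2 ≤ (collapsingMaps n 2).ncard := by
  set A := (· ∘ Fin.rev) '' collapsingMaps n (n - 2)
  set B := Set.range (uncurry (lowCollapse (n := n)))
  have hA : A.ncard = (collapsingMaps n (n - 2)).ncard :=
    Set.ncard_image_of_injective _ Fin.rev_surjective.injective_comp_right
  have hB : B.ncard = n ^ 2 := by
    rw [Set.ncard_range_of_injective (lowCollapse_injective (by omega))]
    simp [sq]
  have hAB : Disjoint A B := by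
    rw [Set.disjoint_left]
    rintro _ ⟨γ, ⟨-, m, hm, hmγ⟩, rfl⟩ ⟨⟨x, y⟩, hxy⟩
    change lowCollapse x y = γ ∘ Fin.rev at hxy
    rw [← Fin.rev_surjective.range_comp, ← hxy] at hmγ
    exact hmγ (mem_range_lowCollapse (by omega))
  have hsub : A ∪ B ⊆ collapsingMaps n 2 := by
    refine Set.union_subset ?_ ?_
    · rintro _ ⟨γ, hγ, rfl⟩
      exact comp_rev_mem_collapsingMaps (by omega) (by omega) hγ
    · rintro _ ⟨⟨x, y⟩, rfl⟩
      exact lowCollapse_mem_collapsingMaps (by omega) x y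
  calc (collapsingMaps n (n - 2)).ncard + n ^ 2 = (A ∪ B).ncard := by
        rw [Set.ncard_union_eq hAB, hA, hB]
    _ ≤ (collapsingMaps n 2).ncard := Set.ncard_le_ncard hsub

end

/-- **Lemma 3.19.** For `n ≥ 7`, `|U_{2,n-2}| - |U_{n-2,2}| ≥ n(n-1)/2`. -/
theorem lemma_3_19 (n : ℕ) (hn : 7 ≤ n) :
    (Ukl n (n - 2)).ncard + n * (n - 1) / 2 ≤ (Ukl n 2).ncard := by
  rw [ncard_Ukl (Nat.sub_le n 2), ncard_Ukl (k := 2) (by omega)]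
  have hpowers := ncard_twoCyclePowers_le (n := n) (k := n - 2) (l := 2) (by omega) (by omega)
  have hcollapsing := ncard_collapsingMaps_add_sq_le hn
  have hsq : n * (n - 1) / 2 ≤ n ^ 2 :=
    (Nat.div_le_self _ _).trans (by rw [sq]; exact Nat.mul_le_mul_left n (Nat.sub_le n 1))
  omega
end
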